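/- Let V be a finite-dimensional vector space over a finite field F, let X = (X_1,...,X_n) be a family of subspaces of V, and let T ≤ V be a subspace. Then T is a partial q-transversal of X if and only if for every subset J ⊆ {1,...,n} we have dim(T ∩ ⋂_{j∈J} X_j) + |J| ≤ n, where the intersection over the empty index set is V. -/

import Mathlib

/-!
Fix a basis `b` of `T` and join `i` to every index `j` with `b i ∉ X j`. The neighbours of a set
`s` of indices form the complement of `J = {j | b i ∈ X j for all i ∈ s}`, and the `b i` with
`i ∈ s` are independent vectors of `T ⊓ ⋂_{j ∈ J} X j`; so the rank condition is Hall's condition.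
Conversely, extend a basis of `W = T ⊓ ⋂_{j ∈ J} X j` to one of `T`: the injection has to send
the `dim W` vectors taken from `W` outside `J`.
-/

/-- `T` is a partial q-transversal of the family `X` of subspaces of `V`: every
(vector-space) basis `b 1, …, b m` of `T` admits an injection `σ` into the index set
with `b i ∉ X (σ i)` for all `i`. -/
def IsPartialQTransversal {F V ι : Type*} [Field F] [AddCommGroup V] [Module F V]
    (X : ι → Submodule F V) (T : Submodule F V) : Prop :=
  ∀ (m : ℕ) (b : Fin m → V), LinearIndependent F b → Submodule.span F (Set.range b) = T →
    ∃ σ : Fin m → ι, Function.Injective σ ∧ ∀ i, b i ∉ X (σ i)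

open Finset Module

theorem Module.Basis.sumExtend_apply_inl {F V ι : Type*} [Field F] [AddCommGroup V]
    [Module F V] {v : ι → V} (hv : LinearIndependent F v) (i : ι) :
    Basis.sumExtend hv (Sum.inl i) = v i := by
  rw [Basis.sumExtend]
  simp only [Basis.reindex_apply, Basis.coe_extend]
  rfl

theorem LinearIndependent.card_le_finrank_of_forall_mem {F V ι : Type*} [Field F]
    [AddCommGroup V] [Module F V] {b : ι → V} (hb : LinearIndependent F b) {W : Submodule F V}
    [FiniteDimensional F W] {s : Finset ι} (hs : ∀ i ∈ s, b i ∈ W) : #s ≤ finrank F W := by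
  have hbW : LinearIndependent F fun i : s ↦ (⟨b i, hs i i.2⟩ : W) :=
    .of_comp W.subtype (hb.comp _ Subtype.val_injective)
  simpa using hbW.fintype_card_le_finrank

section

variable {F V κ : Type*} [Field F] [AddCommGroup V] [Module F V]
  {X : κ → Submodule F V} {T : Submodule F V}

theorem IsPartialQTransversal.exists_injective (hT : IsPartialQTransversal X T) {ι : Type*}
    [Finite ι] {b : ι → V} (hb : LinearIndependent F b)
    (hspan : Submodule.span F (Set.range b) = T) :
    ∃ σ : ι → κ, Function.Injective σ ∧ ∀ i, b i ∉ X (σ i) := by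
  obtain ⟨m, ⟨e⟩⟩ := Finite.exists_equiv_fin ι
  obtain ⟨σ, hσ, hbσ⟩ :=
    hT m (b ∘ e.symm) (hb.comp _ e.symm.injective) (by rwa [e.symm.surjective.range_comp])
  exact ⟨σ ∘ e, hσ.comp e.injective, fun i ↦ by simpa using hbσ (e i)⟩

theorem IsPartialQTransversal.finrank_add_card_le [Fintype κ] [FiniteDimensional F V]
    (hT : IsPartialQTransversal X T) {W : Submodule F V} (hWT : W ≤ T) (J : Finset κ)
    (hWJ : W ≤ ⨅ j ∈ J, X j) : finrank F W + #J ≤ Fintype.card κ := by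
  classical
  have hw : LinearIndependent F (Submodule.inclusion hWT ∘ finBasis F W) :=
    (finBasis F W).linearIndependent.map' _ (Submodule.ker_inclusion _ _ hWT)
  let B := Basis.sumExtend hw
  have : Finite _ := Module.Finite.finite_basis B
  have hspan : Submodule.span F (Set.range (T.subtype ∘ B)) = T := by
    rw [Set.range_comp, ← Submodule.map_span, B.span_eq, Submodule.map_top,
      Submodule.range_subtype]
  obtain ⟨σ, hσ, hbσ⟩ := hT.exists_injective (B.linearIndependent.map' _ T.ker_subtype) hspan
  have hσJ : ∀ i, σ (Sum.inl i) ∉ J := by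
    intro i hiJ
    have hBW : (B (Sum.inl i) : V) ∈ W := by
      simp [B, Basis.sumExtend_apply_inl]
    exact hbσ (Sum.inl i) (hWJ.trans (iInf₂_le _ hiJ) hBW)
  have hd : finrank F W ≤ #Jᶜ := by
    simpa using card_le_card_of_injOn (s := univ) _ (fun i _ ↦ mem_compl.2 (hσJ i))
      (hσ.comp Sum.inl_injective).injOn
  rw [card_compl] at hd
  have := card_le_univ J
  omega

theorem isPartialQTransversal_of_finrank_add_card_le [Fintype κ] [FiniteDimensional F V]
    (h : ∀ J : Finset κ, finrank F ↥(T ⊓ ⨅ j ∈ J, X j) + #J ≤ Fintype.card κ) :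
    IsPartialQTransversal X T := by
  classical
  intro m b hb hspan
  have hbT : ∀ i, b i ∈ T := fun i ↦ hspan ▸ Submodule.subset_span (Set.mem_range_self i)
  let t : Fin m → Finset κ := fun i ↦ {j | b i ∉ X j}
  suffices hall : ∀ s : Finset (Fin m), #s ≤ #(s.biUnion t) by
    obtain ⟨σ, hσ, hσt⟩ := (all_card_le_biUnion_card_iff_exists_injective t).mp hall
    exact ⟨σ, hσ, fun i ↦ by simpa [t] using hσt i⟩
  intro s
  set J : Finset κ := {j | ∀ i ∈ s, b i ∈ X j}
  have hneighbours : s.biUnion t = Jᶜ := by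
    ext j
    simp [t, J]
  have hs : #s ≤ finrank F ↥(T ⊓ ⨅ j ∈ J, X j) :=
    hb.card_le_finrank_of_forall_mem fun i hi ↦
      Submodule.mem_inf.2 ⟨hbT i, (Submodule.mem_iInf _).2 fun j ↦
        (Submodule.mem_iInf _).2 fun hj ↦ (mem_filter.mp hj).2 i hi⟩
  rw [hneighbours, card_compl]
  have := h J
  omega

end

theorem isPartialQTransversal_iff_general {F V : Type*} [Field F]
    [AddCommGroup V] [Module F V] [FiniteDimensional F V]
    (n : ℕ) (X : Fin n → Submodule F V) (T : Submodule F V) :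
    IsPartialQTransversal X T ↔
    (∀ J : Finset (Fin n), Module.finrank F ↥(T ⊓ ⨅ j ∈ J, X j) + J.card ≤ n) := by
  constructor
  · intro hT J
    simpa using hT.finrank_add_card_le inf_le_left J inf_le_right
  · intro h
    exact isPartialQTransversal_of_finrank_add_card_le fun J ↦ by simpa using h J

/-- A subspace `T ≤ V` is a partial q-transversal of `X = (X 1, …, X n)` iff for every
`J ⊆ {1,…,n}` we have `dim (T ⊓ ⋂_{j ∈ J} X j) + |J| ≤ n` (the intersection over the
empty index set being all of `V`). -/
theorem isPartialQTransversal_iff {F V : Type*} [Field F] [Fintype F]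
    [AddCommGroup V] [Module F V] [FiniteDimensional F V]
    (n : ℕ) (X : Fin n → Submodule F V) (T : Submodule F V) :
    IsPartialQTransversal X T ↔
    (∀ J : Finset (Fin n), Module.finrank F ↥(T ⊓ ⨅ j ∈ J, X j) + J.card ≤ n) :=
  isPartialQTransversal_iff_general n X T
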